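/- arXiv:2602.12096 — 2 statements merged into one kernel-verified Lean document; each statement's English description precedes it below -/
import Mathlib

section
/- Let s, t ∈ V, let P = (v₀, …, v_k) be a walk from s = v₀ to t = v_k whose cost equals the distance c* = d(s,t), and let h be a heuristic admissible for target t. Let CLOSED ⊆ V with s ∈ CLOSED and t ∉ CLOSED, and let g : V → ℝ≥0 satisfy g(s) = 0 and the relaxation condition g(v) ≤ g(u) + c(u,v) for every edge (u,v) with u ∈ CLOSED. Then the first vertex v on P that does not belong to CLOSED satisfies g(v) + h(v) ≤ c*; in particular, the infimum of g + h over V ∖ CLOSED is at most c*. -/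
open scoped NNReal ENNReal

/-- A walk of length `k` from `u` to `t` along edge relation `E`,
given by its sequence of vertices `v`. -/
def IsWalk {V : Type*} (E : V → V → Prop) (u t : V) (k : ℕ) (v : ℕ → V) : Prop :=
  v 0 = u ∧ v k = t ∧ ∀ i < k, E (v i) (v (i + 1))

/-- The cost of a walk of length `k` with vertex sequence `v`. -/
noncomputable def walkCost {V : Type*} (c : V → V → ℝ≥0) (k : ℕ) (v : ℕ → V) : ℝ≥0 :=
  ∑ i ∈ Finset.range k, c (v i) (v (i + 1))

/-- The distance from `u` to `t`: the infimum in `ℝ≥0∞` of costs of walks from `u` to `t`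
(equal to `⊤` if no walk exists). -/
noncomputable def graphDist {V : Type*} (E : V → V → Prop) (c : V → V → ℝ≥0) (u t : V) : ℝ≥0∞ :=
  sInf {x : ℝ≥0∞ | ∃ k v, IsWalk E u t k v ∧ x = (walkCost c k v : ℝ≥0∞)}

/-- A heuristic `h` is admissible for target `t` if it never overestimates
the distance to `t`. -/
def Admissible {V : Type*} (E : V → V → Prop) (c : V → V → ℝ≥0) (h : V → ℝ≥0) (t : V) : Prop :=
  ∀ x, (h x : ℝ≥0∞) ≤ graphDist E c x t

/-- A heuristic `h` is consistent if `h u ≤ c u v + h v` for every edge `(u, v)`. -/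
def Consistent {V : Type*} (E : V → V → Prop) (c : V → V → ℝ≥0) (h : V → ℝ≥0) : Prop :=
  ∀ u v, E u v → h u ≤ c u v + h v

/-- `t` is reachable from `u` if some walk from `u` to `t` exists. -/
def Reach {V : Type*} (E : V → V → Prop) (u t : V) : Prop :=
  ∃ k v, IsWalk E u t k v

/-!
Split the optimal walk at its first vertex `v i` outside `CLOSED`. Every earlier vertex is
closed, so the relaxation condition propagates `g (v 0) = 0` along the prefix and gives
`g (v i) ≤` cost of the prefix; admissibility bounds `h (v i)` by the cost of the suffix,
which is itself a walk to `t`. The two bounds add up to the cost of the whole walk.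
-/

section Walks

variable {V : Type*} {E : V → V → Prop} {u t : V} {k : ℕ} {v : ℕ → V}

theorem IsWalk.drop (hwalk : IsWalk E u t k v) {i : ℕ} (hik : i ≤ k) :
    IsWalk E (v i) t (k - i) (fun j => v (i + j)) := by
  obtain ⟨-, hvk, hE⟩ := hwalk
  refine ⟨rfl, by simpa [Nat.add_sub_cancel' hik] using hvk, fun j hj => ?_⟩
  simpa only [← Nat.add_assoc] using hE (i + j) (by omega)

theorem walkCost_eq_add_drop (c : V → V → ℝ≥0) {i : ℕ} (hik : i ≤ k) :
    walkCost c k v = walkCost c i v + walkCost c (k - i) (fun j => v (i + j)) := by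
  simp only [walkCost, ← Finset.sum_range_add_sum_Ico _ hik, Finset.sum_Ico_eq_sum_range,
    Nat.add_assoc]

theorem graphDist_le_walkCost (c : V → V → ℝ≥0) (hwalk : IsWalk E u t k v) :
    graphDist E c u t ≤ walkCost c k v :=
  sInf_le ⟨k, v, hwalk, rfl⟩

theorem Admissible.le_walkCost {c : V → V → ℝ≥0} {h : V → ℝ≥0} (hadm : Admissible E c h t)
    (hwalk : IsWalk E u t k v) : h u ≤ walkCost c k v := by
  exact_mod_cast (hadm u).trans (graphDist_le_walkCost c hwalk)

theorem le_add_walkCost_of_relax {c : V → V → ℝ≥0} {g : V → ℝ≥0} {S : Set V}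
    (hrelax : ∀ x y, E x y → x ∈ S → g y ≤ g x + c x y) {i : ℕ}
    (hE : ∀ j < i, E (v j) (v (j + 1))) (hS : ∀ j < i, v j ∈ S) :
    g (v i) ≤ g (v 0) + walkCost c i v := by
  induction i with
  | zero => simp [walkCost]
  | succ n ih =>
    calc g (v (n + 1)) ≤ g (v n) + c (v n) (v (n + 1)) :=
          hrelax _ _ (hE n n.lt_succ_self) (hS n n.lt_succ_self)
      _ ≤ g (v 0) + walkCost c n v + c (v n) (v (n + 1)) := by
          gcongr
          exact ih (fun j hj => hE j (by omega)) (fun j hj => hS j (by omega))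
      _ = g (v 0) + walkCost c (n + 1) v := by
          rw [walkCost, walkCost, Finset.sum_range_succ, add_assoc]

end Walks

theorem exists_first_not_mem {V : Type*} {S : Set V} {v : ℕ → V} {k : ℕ} (hk : v k ∉ S) :
    ∃ i ≤ k, (∀ j < i, v j ∈ S) ∧ v i ∉ S := by
  classical
  have hex : ∃ i, v i ∉ S := ⟨k, hk⟩
  exact ⟨Nat.find hex, Nat.find_min' hex hk, fun j hj => not_not.mp (Nat.find_min hex hj),
    Nat.find_spec hex⟩

theorem stmt1_general {V : Type*} (E : V → V → Prop) (c : V → V → ℝ≥0)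
    (s t : V) (k : ℕ) (v : ℕ → V) (h : V → ℝ≥0)
    (hwalk : IsWalk E s t k v)
    (hadm : Admissible E c h t)
    (CLOSED : Set V) (ht : t ∉ CLOSED)
    (g : V → ℝ≥0) (hg0 : g s = 0)
    (hrelax : ∀ x y, E x y → x ∈ CLOSED → g y ≤ g x + c x y) :
    (∃ i ≤ k, (∀ j < i, v j ∈ CLOSED) ∧ v i ∉ CLOSED ∧
        g (v i) + h (v i) ≤ walkCost c k v) ∧
      (⨅ x ∈ {x | x ∉ CLOSED}, ((g x : ℝ≥0∞) + h x)) ≤ (walkCost c k v : ℝ≥0∞) := by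
  obtain ⟨i, hik, hclosed, hopen⟩ := exists_first_not_mem (hwalk.2.1 ▸ ht)
  have hprefix : g (v i) ≤ walkCost c i v := by
    simpa [hwalk.1, hg0] using le_add_walkCost_of_relax hrelax
      (fun j hj => hwalk.2.2 j (by omega)) hclosed
  have hsuffix : h (v i) ≤ walkCost c (k - i) (fun j => v (i + j)) :=
    hadm.le_walkCost (hwalk.drop hik)
  have hfrontier : g (v i) + h (v i) ≤ walkCost c k v := by
    rw [walkCost_eq_add_drop c hik]
    exact add_le_add hprefix hsuffix
  refine ⟨⟨i, hik, hclosed, hopen, hfrontier⟩, ?_⟩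
  calc (⨅ x ∈ {x | x ∉ CLOSED}, ((g x : ℝ≥0∞) + h x))
      ≤ (g (v i) : ℝ≥0∞) + h (v i) := biInf_le _ hopen
    _ ≤ walkCost c k v := by exact_mod_cast hfrontier

/-- Open-frontier invariant: along an optimal walk, the first vertex outside `CLOSED`
has f-value at most `c*`; in particular the infimum of `g + h` over the frontier is
at most `c*`. -/
theorem stmt1 {V : Type*} [Fintype V] (E : V → V → Prop) (c : V → V → ℝ≥0)
    (s t : V) (k : ℕ) (v : ℕ → V) (h : V → ℝ≥0)
    (hwalk : IsWalk E s t k v)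
    (hopt : (walkCost c k v : ℝ≥0∞) = graphDist E c s t)
    (hadm : Admissible E c h t)
    (CLOSED : Set V) (hs : s ∈ CLOSED) (ht : t ∉ CLOSED)
    (g : V → ℝ≥0) (hg0 : g s = 0)
    (hrelax : ∀ x y, E x y → x ∈ CLOSED → g y ≤ g x + c x y) :
    (∃ i ≤ k, (∀ j < i, v j ∈ CLOSED) ∧ v i ∉ CLOSED ∧
        g (v i) + h (v i) ≤ walkCost c k v) ∧
      (⨅ x ∈ {x | x ∉ CLOSED}, ((g x : ℝ≥0∞) + h x)) ≤ (walkCost c k v : ℝ≥0∞) :=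
  stmt1_general E c s t k v h hwalk hadm CLOSED ht g hg0 hrelax
end

section
/- Let V be a finite type with an edge relation E : V → V → Prop, let s ∈ V, and let (Sₙ)ₙ be a sequence of subsets of V such that S₀ = {s} and for every n: if there exists an edge (u,v) with u ∈ Sₙ and v ∉ Sₙ, then Sₙ₊₁ = Sₙ ∪ {w} for some vertex w ∉ Sₙ admitting an edge (u,w) with u ∈ Sₙ; otherwise Sₙ₊₁ = Sₙ. Then for every n ≥ card V, the set Sₙ contains every vertex reachable from s; in particular, if some goal vertex t is reachable from s, then t ∈ Sₙ for all n ≥ card V. -/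
/-! While the explored set has an edge leaving it, each step adds a new vertex, so this can
happen at most `card V - 1` times; from then on no edge leaves the explored set, and a set
containing `s` that no edge leaves contains every vertex reachable from `s`. -/

open scoped NNReal ENNReal

def HasExitEdge {V : Type*} (E : V → V → Prop) (A : Set V) : Prop :=
  ∃ u ∈ A, ∃ x, E u x ∧ x ∉ A

theorem Reach.mem_of_not_hasExitEdge {V : Type*} {E : V → V → Prop} {s t : V} {A : Set V}
    (hst : Reach E s t) (hs : s ∈ A) (hA : ¬ HasExitEdge E A) : t ∈ A := by
  obtain ⟨k, v, rfl, rfl, hE⟩ := hst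
  have hwalk : ∀ i ≤ k, v i ∈ A := by
    intro i hi
    induction i with
    | zero => exact hs
    | succ i ih =>
      by_contra hout
      exact hA ⟨v i, ih (by omega), v (i + 1), hE i (by omega), hout⟩
  exact hwalk k le_rfl

namespace Exploration

variable {V : Type*} {E : V → V → Prop} {S : ℕ → Set V}
  (hgrow : ∀ n, HasExitEdge E (S n) →
    ∃ w ∉ S n, (∃ u ∈ S n, E u w) ∧ S (n + 1) = insert w (S n))
  (hstall : ∀ n, ¬ HasExitEdge E (S n) → S (n + 1) = S n)
include hgrow hstall

theorem monotone : Monotone S := by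
  refine monotone_nat_of_le_succ fun n => ?_
  by_cases h : HasExitEdge E (S n)
  · obtain ⟨w, -, -, hw⟩ := hgrow n h
    exact hw ▸ Set.subset_insert w (S n)
  · exact (hstall n h).ge

theorem card_add_le_or_not_hasExitEdge [Finite V] (n : ℕ) :
    n + (S 0).ncard ≤ (S n).ncard ∨ ¬ HasExitEdge E (S n) := by
  induction n with
  | zero => exact Or.inl (zero_add _).le
  | succ n ih =>
    by_cases h : HasExitEdge E (S n)
    · obtain ⟨w, hw, -, hSn⟩ := hgrow n h
      rw [hSn, Set.ncard_insert_of_notMem hw (Set.toFinite _)]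
      exact Or.inl (by have := ih.resolve_right (not_not.mpr h); omega)
    · exact Or.inr (hstall n h ▸ h)

theorem not_hasExitEdge_of_card_lt [Finite V] {n : ℕ} (hn : Nat.card V < n + (S 0).ncard) :
    ¬ HasExitEdge E (S n) :=
  (card_add_le_or_not_hasExitEdge hgrow hstall n).resolve_left fun h =>
    (hn.trans_le h).not_ge (Set.ncard_le_card (S n))

end Exploration

/-- Completeness of systematic expansion: a process that, whenever possible, adds a new
vertex adjacent to the explored set, contains every vertex reachable from `s` after at
most `card V` steps; in particular any reachable goal vertex. -/
theorem stmt6 {V : Type*} [Fintype V] (E : V → V → Prop)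
    (s : V) (S : ℕ → Set V)
    (hS0 : S 0 = {s})
    (hgrow : ∀ n, (∃ u ∈ S n, ∃ x, E u x ∧ x ∉ S n) →
      ∃ w ∉ S n, (∃ u ∈ S n, E u w) ∧ S (n + 1) = insert w (S n))
    (hstall : ∀ n, (¬ ∃ u ∈ S n, ∃ x, E u x ∧ x ∉ S n) → S (n + 1) = S n) :
    ∀ n, Fintype.card V ≤ n → ∀ t, Reach E s t → t ∈ S n := by
  intro n hn t ht
  have hs : s ∈ S n := Exploration.monotone hgrow hstall n.zero_le (hS0 ▸ rfl)
  have hclosed : ¬ HasExitEdge E (S n) :=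
    Exploration.not_hasExitEdge_of_card_lt hgrow hstall
      (by rw [hS0, Set.ncard_singleton, Nat.card_eq_fintype_card]; omega)
  exact ht.mem_of_not_hasExitEdge hs hclosed
end
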